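/- Let θ* ∈ Θ and let h : ℝ^p → ℝ be smooth with E_{θ*}[A_{θ*}(h ∇_x h)] = 0 and E_{θ*}[‖∇_x h‖²] < ∞. Then the pointwise identity A_{θ*}(h ∇_x h) = h · A_{θ*}(∇_x h) + ‖∇_x h‖² holds, and consequently A_{θ*}(∇_x h) = 0 holds q_{θ*}-almost everywhere if and only if ∇_x h = 0 holds q_{θ*}-almost everywhere. -/

import Mathlib

open MeasureTheory Real Filter

/-- Partial derivative in the `i`-th coordinate. -/
noncomputable def pdv {n : ℕ} (i : Fin n) (f : (Fin n → ℝ) → ℝ) (x : Fin n → ℝ) : ℝ :=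
  deriv (fun t => f (Function.update x i t)) (x i)

/-- Gradient of a scalar function on ℝ^n. -/
noncomputable def gradv {n : ℕ} (f : (Fin n → ℝ) → ℝ) (x : Fin n → ℝ) : Fin n → ℝ :=
  fun i => pdv i f x

/-- Divergence of a vector field on ℝ^n. -/
noncomputable def divv {n : ℕ} (f : (Fin n → ℝ) → (Fin n → ℝ)) (x : Fin n → ℝ) : ℝ :=
  ∑ i, pdv i (fun y => f y i) x

/-- Divergence-based Stein operator `A_q f = div(q f) / q`. -/
noncomputable def stein {n : ℕ} (q : (Fin n → ℝ) → ℝ) (f : (Fin n → ℝ) → (Fin n → ℝ))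
    (x : Fin n → ℝ) : ℝ :=
  divv (fun y i => q y * f y i) x / q x

/-- Gradient (in x) of the `j`-th Fisher score function `∂_{θ_j} log q_θ`. -/
noncomputable def scoreGrad {d p : ℕ} (q : (Fin d → ℝ) → (Fin p → ℝ) → ℝ)
    (θ : Fin d → ℝ) (j : Fin d) (x : Fin p → ℝ) : Fin p → ℝ :=
  gradv (fun z => pdv j (fun θ' => Real.log (q θ' z)) θ) x

lemma myHasDerivAt_update {n : ℕ} (x : Fin n → ℝ) (i : Fin n) (t : ℝ) :
    HasDerivAt (fun s : ℝ => Function.update x i s) (Pi.single i 1) t := by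
  have he : (fun s : ℝ => Function.update x i s)
      = fun s => (x - x i • (Pi.single i (1:ℝ) : Fin n → ℝ)) + s • (Pi.single i (1:ℝ) : Fin n → ℝ) := by
    funext s j
    by_cases hj : j = i
    · subst hj; simp [Function.update_self]
    · simp [Function.update_of_ne hj, Pi.single_eq_of_ne hj]
  rw [he]
  simpa using ((hasDerivAt_id t).smul_const (Pi.single i (1:ℝ) : Fin n → ℝ)).const_add
    (x - x i • (Pi.single i (1:ℝ) : Fin n → ℝ))

lemma hasDerivAt_pdv {n : ℕ} {f : (Fin n → ℝ) → ℝ} {x : Fin n → ℝ}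
    (hf : DifferentiableAt ℝ f x) (i : Fin n) :
    HasDerivAt (fun t => f (Function.update x i t)) (fderiv ℝ f x (Pi.single i 1)) (x i) := by
  have h1 := myHasDerivAt_update x i (x i)
  have h2 : HasFDerivAt f (fderiv ℝ f x) ((fun t => Function.update x i t) (x i)) := by
    simpa [Function.update_eq_self] using hf.hasFDerivAt
  exact h2.comp_hasDerivAt (x i) h1

lemma pdv_eq {n : ℕ} {f : (Fin n → ℝ) → ℝ} {x : Fin n → ℝ}
    (hf : DifferentiableAt ℝ f x) (i : Fin n) :
    pdv i f x = fderiv ℝ f x (Pi.single i 1) := (hasDerivAt_pdv hf i).deriv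

lemma pdv_mul {n : ℕ} {f g : (Fin n → ℝ) → ℝ} {x : Fin n → ℝ}
    (hf : DifferentiableAt ℝ f x) (hg : DifferentiableAt ℝ g x) (i : Fin n) :
    pdv i (fun y => f y * g y) x = pdv i f x * g x + f x * pdv i g x := by
  have hd := ((hasDerivAt_pdv hf i).mul (hasDerivAt_pdv hg i)).deriv
  simp only [Function.update_eq_self, Pi.mul_def] at hd
  rw [pdv, hd, pdv_eq hf i, pdv_eq hg i]

/-- the pointwise identity `A_{θ*}(h ∇ₓh) = h A_{θ*}(∇ₓh) + ‖∇ₓh‖²` holds, and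
consequently `A_{θ*}(∇ₓh) = 0` q_{θ*}-a.e. iff `∇ₓh = 0` q_{θ*}-a.e. -/
theorem stmt6 {d p : ℕ} (Θ : Set (Fin d → ℝ)) (hΘ : IsOpen Θ)
    (q : (Fin d → ℝ) → (Fin p → ℝ) → ℝ)
    (hpos : ∀ θ x, 0 < q θ x)
    (hsmooth : ContDiff ℝ (⊤ : ℕ∞) (fun pr : (Fin d → ℝ) × (Fin p → ℝ) => q pr.1 pr.2))
    (θs : Fin d → ℝ) (hθs : θs ∈ Θ)
    (h : (Fin p → ℝ) → ℝ) (hh : ContDiff ℝ (⊤ : ℕ∞) h)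
    -- `E_{θ*}[A_{θ*}(h ∇ₓ h)] = 0`
    (h0 : ∫ x, q θs x * stein (q θs) (fun y i => h y * gradv h y i) x = 0)
    -- `E_{θ*}[‖∇ₓ h‖²] < ∞`
    (hfin : Integrable (fun x => q θs x * ∑ i, (gradv h x i) ^ 2)) :
    (∀ x, stein (q θs) (fun y i => h y * gradv h y i) x
        = h x * stein (q θs) (fun y => gradv h y) x + ∑ i, (gradv h x i) ^ 2)
    ∧ ((∀ᵐ x ∂(volume.withDensity (fun x => ENNReal.ofReal (q θs x))),
          stein (q θs) (fun y => gradv h y) x = 0)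
        ↔ (∀ᵐ x ∂(volume.withDensity (fun x => ENNReal.ofReal (q θs x))),
          gradv h x = 0)) := by
  have hQ : ContDiff ℝ (⊤ : ℕ∞) (q θs) := by
    have : (q θs) = (fun pr : (Fin d → ℝ) × (Fin p → ℝ) => q pr.1 pr.2) ∘ (fun x => (θs, x)) :=
      rfl
    rw [this]
    exact hsmooth.comp (ContDiff.prodMk (contDiff_const (c := θs)) contDiff_id)
  have hhd : Differentiable ℝ h := hh.differentiable (by simp)
  have hQd : Differentiable ℝ (q θs) := hQ.differentiable (by simp)
  -- The gradient as fderiv applied to basis vectors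
  have hgr : ∀ (y : Fin p → ℝ) (i : Fin p), gradv h y i = fderiv ℝ h y (Pi.single i 1) :=
    fun y i => pdv_eq (hhd y) i
  have hGsm : ∀ i : Fin p, ContDiff ℝ (⊤ : ℕ∞) (fun y => fderiv ℝ h y (Pi.single i 1)) := by
    intro i
    exact (hh.fderiv_right (by simp)).clm_apply contDiff_const
  have hGid : ∀ i : Fin p, Differentiable ℝ (fun y => gradv h y i) := by
    intro i
    have : (fun y => gradv h y i) = fun y => fderiv ℝ h y (Pi.single i 1) := by
      funext y; exact hgr y i
    rw [this]; exact ((hGsm i).differentiable (by simp))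
  -- the pointwise identity
  have key : ∀ x, stein (q θs) (fun y i => h y * gradv h y i) x
      = h x * stein (q θs) (fun y => gradv h y) x + ∑ i, (gradv h x i) ^ 2 := by
    intro x
    have hQx : q θs x ≠ 0 := (hpos θs x).ne'
    have e1 : ∀ i : Fin p, pdv i (fun y => q θs y * (h y * gradv h y i)) x
        = gradv h x i * (q θs x * gradv h x i)
          + h x * pdv i (fun y => q θs y * gradv h y i) x := by
      intro i
      have he : (fun y => q θs y * (h y * gradv h y i))
          = fun y => h y * (q θs y * gradv h y i) := by
        funext y; ring
      rw [he, pdv_mul (g := fun y => q θs y * gradv h y i) (hhd x) ((hQd x).mul ((hGid i) x)) i]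
      have : pdv i h x = gradv h x i := rfl
      rw [this]
    have e2 : ∑ i, gradv h x i * (q θs x * gradv h x i) = q θs x * ∑ i, (gradv h x i) ^ 2 := by
      rw [Finset.mul_sum]; exact Finset.sum_congr rfl (fun i _ => by ring)
    unfold stein divv
    beta_reduce
    rw [Finset.sum_congr rfl (fun i _ => e1 i), Finset.sum_add_distrib, ← Finset.mul_sum, e2]
    field_simp
    ring
  refine ⟨key, ?_⟩
  -- a.e. w.r.t. the density measure equals a.e. w.r.t. volume
  have hmeas : Measurable (fun x => ENNReal.ofReal (q θs x)) :=
    ENNReal.measurable_ofReal.comp hQ.continuous.measurable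
  have haeiff : ∀ (P : (Fin p → ℝ) → Prop),
      (∀ᵐ x ∂(volume.withDensity (fun x => ENNReal.ofReal (q θs x))), P x)
        ↔ ∀ᵐ x ∂(volume : Measure (Fin p → ℝ)), P x := by
    intro P
    rw [ae_withDensity_iff hmeas]
    exact eventually_congr (Eventually.of_forall fun x => imp_iff_right (by
      simp [ENNReal.ofReal_eq_zero, (hpos θs x).not_ge]))
  rw [haeiff, haeiff]
  constructor
  · -- forward direction
    intro hst
    -- q * h * stein(∇h) is a.e. zero
    have hae1 : (fun x => q θs x * (h x * stein (q θs) (fun y => gradv h y) x))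
        =ᵐ[volume] (fun _ => (0:ℝ)) := by
      filter_upwards [hst] with x hx
      simp [hx]
    have hsum : (fun x => q θs x * stein (q θs) (fun y i => h y * gradv h y i) x)
        =ᵐ[volume] (fun x => q θs x * ∑ i, (gradv h x i) ^ 2) := by
      filter_upwards [hae1] with x hx
      rw [key x, mul_add, hx]
      ring
    have hint0 : ∫ x, q θs x * ∑ i, (gradv h x i) ^ 2 = 0 := by
      rw [← integral_congr_ae hsum, h0]
    have hnn : 0 ≤ fun x => q θs x * ∑ i, (gradv h x i) ^ 2 := by
      intro x
      exact mul_nonneg (hpos θs x).le (Finset.sum_nonneg fun i _ => sq_nonneg _)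
    have hz : (fun x => q θs x * ∑ i, (gradv h x i) ^ 2) =ᵐ[volume] 0 :=
      (integral_eq_zero_iff_of_nonneg hnn hfin).mp hint0
    filter_upwards [hz] with x hx
    have hsz : (∑ i, (gradv h x i) ^ 2) = 0 := by
      have := hx
      simp only [Pi.zero_apply] at this
      exact (mul_eq_zero.mp this).resolve_left (hpos θs x).ne'
    funext i
    have := (Finset.sum_eq_zero_iff_of_nonneg (fun j _ => sq_nonneg (gradv h x j))).mp hsz
      i (Finset.mem_univ i)
    exact pow_eq_zero_iff (n := 2) (by norm_num) |>.mp this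
  · -- reverse direction: gradient a.e. zero + continuity ⇒ everywhere zero ⇒ stein ≡ 0
    intro hg
    have hcont : Continuous (fun x => gradv h x) := by
      apply continuous_pi
      intro i
      have : (fun y => gradv h y i) = fun y => fderiv ℝ h y (Pi.single i 1) := by
        funext y; exact hgr y i
      rw [this]
      exact (hGsm i).continuous
    have hzero : (fun x => gradv h x) = fun _ => (0 : Fin p → ℝ) := by
      rw [← Continuous.ae_eq_iff_eq (μ := volume) hcont continuous_const]
      exact hg
    have hzero' : ∀ y i, gradv h y i = 0 := by
      intro y i
      have := congrFun hzero y
      exact congrFun this i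
    refine Eventually.of_forall fun x => ?_
    have : (fun y i => q θs y * gradv h y i) = fun (y : Fin p → ℝ) (i : Fin p) => (0:ℝ) := by
      funext y i; rw [hzero']; ring
    unfold stein
    rw [this]
    simp [divv, pdv]
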